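/- Suppose f is twice continuously differentiable, X ∈ S_{n,p} satisfies ∇h(X) = 0, and the Hessian of g at X has operator norm at most M₂. Then: (a) for every D₂ ∈ N_X, ⟨D₂, Hh(X)[D₂]⟩ ≥ (2β − M₂)·‖D₂‖_F²; and (b) for every D₁ ∈ T_X and every D₂ ∈ N_X, ⟨D₁, Hh(X)[D₂]⟩ = 0. -/

import Mathlib

open Matrix

attribute [local instance] Matrix.frobeniusNormedAddCommGroup Matrix.frobeniusNormedSpace

namespace ExPen

noncomputable def finner {n p : ℕ} (A B : Matrix (Fin n) (Fin p) ℝ) : ℝ := (Aᵀ * B).trace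

noncomputable def Phi {p : ℕ} (M : Matrix (Fin p) (Fin p) ℝ) : Matrix (Fin p) (Fin p) ℝ :=
  (1 / 2 : ℝ) • (M + Mᵀ)

noncomputable def Amap {n p : ℕ} (X : Matrix (Fin n) (Fin p) ℝ) : Matrix (Fin p) (Fin p) ℝ :=
  (3 / 2 : ℝ) • (1 : Matrix (Fin p) (Fin p) ℝ) - (1 / 2 : ℝ) • (Xᵀ * X)

noncomputable def g {n p : ℕ} (f : Matrix (Fin n) (Fin p) ℝ → ℝ)
    (X : Matrix (Fin n) (Fin p) ℝ) : ℝ := f (X * Amap X)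

noncomputable def hpen {n p : ℕ} (f : Matrix (Fin n) (Fin p) ℝ → ℝ) (β : ℝ)
    (X : Matrix (Fin n) (Fin p) ℝ) : ℝ := g f X + β / 4 * ‖Xᵀ * X - 1‖ ^ 2

noncomputable def dualCLM {n p : ℕ} (G : Matrix (Fin n) (Fin p) ℝ) :
    Matrix (Fin n) (Fin p) ℝ →L[ℝ] ℝ :=
  LinearMap.toContinuousLinearMap
    { toFun := fun D => (Gᵀ * D).trace
      map_add' := by intro D E; simp [Matrix.mul_add]
      map_smul' := by intro c D; simp [Matrix.mul_smul] }

def HasGradAt {n p : ℕ} (φ : Matrix (Fin n) (Fin p) ℝ → ℝ)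
    (X G : Matrix (Fin n) (Fin p) ℝ) : Prop :=
  HasFDerivAt φ (dualCLM G) X

noncomputable def specNorm {n p : ℕ} (X : Matrix (Fin n) (Fin p) ℝ) : ℝ :=
  ‖LinearMap.toContinuousLinearMap
    (Matrix.toEuclideanLin X : EuclideanSpace ℝ (Fin p) →ₗ[ℝ] EuclideanSpace ℝ (Fin n))‖

lemma posSemidef_tmul {n p : ℕ} (X : Matrix (Fin n) (Fin p) ℝ) : (Xᵀ * X).PosSemidef := by
  simpa [Matrix.conjTranspose_eq_transpose_of_trivial] using
    Matrix.posSemidef_conjTranspose_mul_self X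

noncomputable def Pst {n p : ℕ} (X : Matrix (Fin n) (Fin p) ℝ) : Matrix (Fin n) (Fin p) ℝ :=
  X * ((posSemidef_tmul X).1.eigenvectorUnitary.1 * diagonal ((↑) ∘ Real.sqrt ∘ (posSemidef_tmul X).1.eigenvalues) * (star (posSemidef_tmul X).1.eigenvectorUnitary : Matrix (Fin p) (Fin p) ℝ))⁻¹

/-!
Gradients are identified through derivatives along lines `Y + t • D`, which gives
`∇g(Y) = ∇f(Y A(Y)) A(Y) - Y Φ(Yᵀ ∇f(Y A(Y)))` and `∇h(Y) = ∇g(Y) + β Y (YᵀY - I)`.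
At `X ∈ S_{n,p}` the map `Y ↦ Y A(Y)` is stationary along every normal direction `D = X Λ`,
so the Hessian of `f` drops out of `Hg(X)[X Λ]`. Stationarity `∇h(X) = 0` forces
`∇f(X) = X S` with `S` symmetric, and differentiating the gradient formula gives
`Hg(X)[X Λ] = -(3/2) X (S Λ + Λ S) ∈ N_X`, while the penalty contributes `2 β X Λ`.
Part (a) is then Cauchy–Schwarz together with `‖Hg(X)‖ ≤ M₂`, and part (b) is the
orthogonality of `T_X` and `N_X`.
-/

section CurveCalculus

variable {l m o : Type*} [Fintype l] [Fintype m] [Fintype o] {t : ℝ}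

theorem _root_.HasDerivAt.matrix_mul {u : ℝ → Matrix l m ℝ} {v : ℝ → Matrix m o ℝ}
    {u' : Matrix l m ℝ} {v' : Matrix m o ℝ} (hu : HasDerivAt u u' t) (hv : HasDerivAt v v' t) :
    HasDerivAt (fun s => u s * v s) (u' * v t + u t * v') t := by
  let B : Matrix l m ℝ →L[ℝ] Matrix m o ℝ →L[ℝ] Matrix l o ℝ :=
    (mulLinearMap ℝ).mkContinuous₂ 1 fun A C => by simpa using Matrix.frobenius_norm_mul A C
  rw [add_comm]
  exact B.hasDerivAt_of_bilinear (u := u) (v := v) (fun _ => hu) (fun _ => hv)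

theorem _root_.HasDerivAt.matrix_transpose {u : ℝ → Matrix l m ℝ} {u' : Matrix l m ℝ}
    (hu : HasDerivAt u u' t) : HasDerivAt (fun s => (u s)ᵀ) u'ᵀ t :=
  (LinearMap.toContinuousLinearMap
    (Matrix.transposeLinearEquiv l m ℝ ℝ).toLinearMap).hasFDerivAt.comp_hasDerivAt t hu

theorem _root_.HasDerivAt.matrix_trace {u : ℝ → Matrix m m ℝ} {u' : Matrix m m ℝ}
    (hu : HasDerivAt u u' t) : HasDerivAt (fun s => (u s).trace) u'.trace t :=
  (LinearMap.toContinuousLinearMap (Matrix.traceLinearMap m ℝ ℝ)).hasFDerivAt.comp_hasDerivAt t hu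

end CurveCalculus

section LineDerivative

variable {E F : Type*} [NormedAddCommGroup E] [NormedSpace ℝ E] [NormedAddCommGroup F]
  [NormedSpace ℝ F]

theorem hasDerivAt_add_smul (x v : E) : HasDerivAt (fun t : ℝ => x + t • v) v 0 := by
  simpa using ((hasDerivAt_id (0 : ℝ)).smul_const v).const_add x

theorem _root_.HasFDerivAt.apply_eq_of_hasDerivAt_add_smul {φ : E → F} {L : E →L[ℝ] F}
    {x v : E} {w : F} (hφ : HasFDerivAt φ L x) (h : HasDerivAt (fun t : ℝ => φ (x + t • v)) w 0) :
    L v = w :=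
  (hφ.comp_hasDerivAt_of_eq (0 : ℝ) (hasDerivAt_add_smul x v) (by simp)).unique h

end LineDerivative

section Frobenius

variable {n p : ℕ}

open WithLp in
theorem finner_eq_inner (A B : Matrix (Fin n) (Fin p) ℝ) :
    finner A B = inner ℝ (toLp 2 fun i => toLp 2 (A i)) (toLp 2 fun i => toLp 2 (B i)) := by
  simp only [finner, Matrix.trace, Matrix.diag, Matrix.mul_apply, Matrix.transpose_apply,
    PiLp.inner_apply, RCLike.inner_apply, conj_trivial]
  rw [Finset.sum_comm]
  simp [mul_comm]

theorem finner_self (A : Matrix (Fin n) (Fin p) ℝ) : finner A A = ‖A‖ ^ 2 := by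
  rw [finner_eq_inner, real_inner_self_eq_norm_sq]
  rfl

theorem neg_norm_mul_norm_le_finner (A B : Matrix (Fin n) (Fin p) ℝ) :
    -(‖A‖ * ‖B‖) ≤ finner A B := by
  rw [finner_eq_inner]
  exact neg_le_of_abs_le (abs_real_inner_le_norm _ _)

theorem neg_mul_norm_sq_le_finner {M : ℝ} {D B : Matrix (Fin n) (Fin p) ℝ}
    (hB : ‖B‖ ≤ M * ‖D‖) : -(M * ‖D‖ ^ 2) ≤ finner D B := by
  nlinarith [neg_norm_mul_norm_le_finner D B, norm_nonneg D]

theorem finner_add_left (A B C : Matrix (Fin n) (Fin p) ℝ) :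
    finner (A + B) C = finner A C + finner B C := by
  simp [finner, Matrix.add_mul]

theorem finner_sub_left (A B C : Matrix (Fin n) (Fin p) ℝ) :
    finner (A - B) C = finner A C - finner B C := by
  simp [finner, Matrix.sub_mul]

theorem finner_add_right (A B C : Matrix (Fin n) (Fin p) ℝ) :
    finner A (B + C) = finner A B + finner A C := by
  simp [finner, Matrix.mul_add]

theorem finner_smul_right (c : ℝ) (A B : Matrix (Fin n) (Fin p) ℝ) :
    finner A (c • B) = c * finner A B := by
  simp [finner]

theorem eq_of_forall_finner_eq {G G' : Matrix (Fin n) (Fin p) ℝ}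
    (h : ∀ D, finner G D = finner G' D) : G = G' := by
  have h0 : ‖G - G'‖ ^ 2 = 0 := by rw [← finner_self, finner_sub_left, h, sub_self]
  simpa [sub_eq_zero] using h0

/-- Tangent and normal spaces of the Stiefel manifold are orthogonal. -/
theorem finner_mul_eq_zero_of_phi_eq_zero {D X : Matrix (Fin n) (Fin p) ℝ}
    (hD : Phi (Dᵀ * X) = 0) {N : Matrix (Fin p) (Fin p) ℝ} (hN : Nᵀ = N) :
    finner D (X * N) = 0 := by
  have hskew : (Dᵀ * X)ᵀ = -(Dᵀ * X) := by
    rw [Phi, smul_eq_zero] at hD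
    exact eq_neg_of_add_eq_zero_right (hD.resolve_left (by norm_num))
  have h : finner D (X * N) = -finner D (X * N) := calc
    finner D (X * N) = (N * (Dᵀ * X)).trace := by
      rw [finner, ← Matrix.mul_assoc, Matrix.trace_mul_comm]
    _ = (((Dᵀ * X)ᵀ * Nᵀ)ᵀ).trace := by
      rw [Matrix.transpose_mul, Matrix.transpose_transpose, Matrix.transpose_transpose]
    _ = -finner D (X * N) := by
      rw [Matrix.trace_transpose, hskew, hN, Matrix.neg_mul, Matrix.trace_neg, finner,
        Matrix.mul_assoc]
  linarith

end Frobenius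

section Gradient

variable {n p : ℕ} {φ : Matrix (Fin n) (Fin p) ℝ → ℝ}

theorem HasGradAt.comp_hasDerivAt {γ : ℝ → Matrix (Fin n) (Fin p) ℝ}
    {γ' G : Matrix (Fin n) (Fin p) ℝ} {t : ℝ} (hφ : HasGradAt φ (γ t) G)
    (hγ : HasDerivAt γ γ' t) : HasDerivAt (fun s => φ (γ s)) (finner G γ') t :=
  HasFDerivAt.comp_hasDerivAt t hφ hγ

theorem HasGradAt.hasDerivAt_line {Y G : Matrix (Fin n) (Fin p) ℝ} (hφ : HasGradAt φ Y G)
    (D : Matrix (Fin n) (Fin p) ℝ) : HasDerivAt (fun t : ℝ => φ (Y + t • D)) (finner G D) 0 :=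
  HasGradAt.comp_hasDerivAt (by simpa using hφ) (hasDerivAt_add_smul Y D)

theorem HasGradAt.eq_of_hasDerivAt_line {Y G G' : Matrix (Fin n) (Fin p) ℝ}
    (hφ : HasGradAt φ Y G)
    (h : ∀ D, HasDerivAt (fun t : ℝ => φ (Y + t • D)) (finner G' D) 0) : G = G' :=
  eq_of_forall_finner_eq fun D => (hφ.hasDerivAt_line D).unique (h D)

end Gradient

section Phi

variable {p : ℕ}

theorem phi_transpose (M : Matrix (Fin p) (Fin p) ℝ) : Phi Mᵀ = Phi M := by
  simp [Phi, add_comm]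

theorem phi_transpose_mul {n : ℕ} (A B : Matrix (Fin n) (Fin p) ℝ) :
    Phi (Aᵀ * B) = Phi (Bᵀ * A) := by
  rw [← phi_transpose, Matrix.transpose_mul, Matrix.transpose_transpose]

theorem transpose_phi (M : Matrix (Fin p) (Fin p) ℝ) : (Phi M)ᵀ = Phi M := by
  simp [Phi, add_comm]

theorem phi_of_transpose_eq {M : Matrix (Fin p) (Fin p) ℝ} (hM : Mᵀ = M) : Phi M = M := by
  rw [Phi, hM, ← two_smul ℝ M, smul_smul]
  norm_num

theorem trace_mul_transpose_of_transpose_eq {P : Matrix (Fin p) (Fin p) ℝ} (hP : Pᵀ = P)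
    (M : Matrix (Fin p) (Fin p) ℝ) : (P * Mᵀ).trace = (P * M).trace := by
  rw [← Matrix.trace_transpose, Matrix.transpose_mul, Matrix.transpose_transpose, hP,
    Matrix.trace_mul_comm]

theorem trace_mul_phi {P : Matrix (Fin p) (Fin p) ℝ} (hP : Pᵀ = P)
    (M : Matrix (Fin p) (Fin p) ℝ) : (P * Phi M).trace = (P * M).trace := by
  rw [Phi, Matrix.mul_smul, Matrix.mul_add, Matrix.trace_smul, Matrix.trace_add,
    trace_mul_transpose_of_transpose_eq hP]
  simp only [smul_eq_mul]
  ring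

theorem hasDerivAt_phi {M : ℝ → Matrix (Fin p) (Fin p) ℝ} {M' : Matrix (Fin p) (Fin p) ℝ}
    {t : ℝ} (hM : HasDerivAt M M' t) : HasDerivAt (fun s => Phi (M s)) (Phi M') t :=
  (hM.add hM.matrix_transpose).const_smul (1 / 2 : ℝ)

end Phi

section Amap

variable {n p : ℕ}

theorem transpose_amap (Y : Matrix (Fin n) (Fin p) ℝ) : (Amap Y)ᵀ = Amap Y := by
  simp [Amap, Matrix.transpose_sub, Matrix.transpose_smul]

theorem amap_eq_one {X : Matrix (Fin n) (Fin p) ℝ} (hX : Xᵀ * X = 1) : Amap X = 1 := by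
  rw [Amap, hX, ← sub_smul]
  norm_num

variable {γ : ℝ → Matrix (Fin n) (Fin p) ℝ} {γ' : Matrix (Fin n) (Fin p) ℝ} {t : ℝ}

theorem hasDerivAt_amap (hγ : HasDerivAt γ γ' t) :
    HasDerivAt (fun s => Amap (γ s)) (-Phi (γ'ᵀ * γ t)) t := by
  have h := ((hγ.matrix_transpose.matrix_mul hγ).const_smul (1 / 2 : ℝ)).const_sub
    ((3 / 2 : ℝ) • (1 : Matrix (Fin p) (Fin p) ℝ))
  refine h.congr_deriv ?_
  rw [Phi, Matrix.transpose_mul, Matrix.transpose_transpose]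

theorem hasDerivAt_mul_amap (hγ : HasDerivAt γ γ' t) :
    HasDerivAt (fun s => γ s * Amap (γ s)) (γ' * Amap (γ t) - γ t * Phi (γ'ᵀ * γ t)) t := by
  refine (hγ.matrix_mul (hasDerivAt_amap hγ)).congr_deriv ?_
  rw [Matrix.mul_neg, sub_eq_add_neg]

end Amap

section GradientFormulas

variable {n p : ℕ}

/-- The adjoint of `D ↦ D * Amap Y - Y * Phi (Dᵀ * Y)`, the derivative of `Y ↦ Y * Amap Y`;
`jacobianAdjoint Y (∇f (Y * Amap Y))` is `∇g(Y)`. -/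
noncomputable def jacobianAdjoint (Y G : Matrix (Fin n) (Fin p) ℝ) : Matrix (Fin n) (Fin p) ℝ :=
  G * Amap Y - Y * Phi (Yᵀ * G)

theorem finner_jacobianAdjoint (Y G D : Matrix (Fin n) (Fin p) ℝ) :
    finner (jacobianAdjoint Y G) D = finner G (D * Amap Y - Y * Phi (Dᵀ * Y)) := by
  have h₁ : (Amap Y * Gᵀ * D).trace = (Gᵀ * (D * Amap Y)).trace := by
    rw [Matrix.mul_assoc, Matrix.trace_mul_comm, Matrix.mul_assoc]
  have h₂ : (Phi (Yᵀ * G) * (Yᵀ * D)).trace = (Gᵀ * (Y * Phi (Dᵀ * Y))).trace := calc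
    _ = (Phi (Yᵀ * G) * Phi (Dᵀ * Y)).trace := by
      rw [← trace_mul_phi (transpose_phi _), phi_transpose_mul Y D]
    _ = (Phi (Dᵀ * Y) * Phi (Gᵀ * Y)).trace := by
      rw [Matrix.trace_mul_comm, phi_transpose_mul Y G]
    _ = (Phi (Dᵀ * Y) * (Gᵀ * Y)).trace := trace_mul_phi (transpose_phi _) _
    _ = _ := by rw [Matrix.trace_mul_comm, Matrix.mul_assoc]
  simp only [finner, jacobianAdjoint, Matrix.transpose_sub, Matrix.transpose_mul, transpose_amap,
    transpose_phi, Matrix.sub_mul, Matrix.mul_sub, Matrix.trace_sub, Matrix.mul_assoc] at h₁ h₂ ⊢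
  rw [h₁, h₂]

variable {f : Matrix (Fin n) (Fin p) ℝ → ℝ} {Y G : Matrix (Fin n) (Fin p) ℝ}

theorem hasDerivAt_g_line (hf : HasGradAt f (Y * Amap Y) G) (D : Matrix (Fin n) (Fin p) ℝ) :
    HasDerivAt (fun t : ℝ => g f (Y + t • D)) (finner (jacobianAdjoint Y G) D) 0 := by
  have hf₀ : HasGradAt f ((Y + (0 : ℝ) • D) * Amap (Y + (0 : ℝ) • D)) G := by simpa using hf
  have h := hf₀.comp_hasDerivAt (hasDerivAt_mul_amap (hasDerivAt_add_smul Y D))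
  simp only [zero_smul, add_zero] at h
  rw [finner_jacobianAdjoint]
  exact h

theorem hasDerivAt_penalty_line (β : ℝ) (Y D : Matrix (Fin n) (Fin p) ℝ) :
    HasDerivAt (fun t : ℝ => β / 4 * ‖(Y + t • D)ᵀ * (Y + t • D) - 1‖ ^ 2)
      (finner (β • (Y * (Yᵀ * Y - 1))) D) 0 := by
  have hγ := hasDerivAt_add_smul Y D
  have hM := (hγ.matrix_transpose.matrix_mul hγ).sub_const (1 : Matrix (Fin p) (Fin p) ℝ)
  have h := ((hM.matrix_transpose.matrix_mul hM).matrix_trace).const_mul (β / 4)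
  simp only [zero_smul, add_zero] at h
  have hnorm : ∀ M : Matrix (Fin p) (Fin p) ℝ, ‖M‖ ^ 2 = (Mᵀ * M).trace := fun M =>
    (finner_self M).symm
  simp only [hnorm]
  refine h.congr_deriv ?_
  set Q := Yᵀ * Y - 1
  have hQ : Qᵀ = Q := by simp [Q, Matrix.transpose_sub]
  have hDY : (Q * (Dᵀ * Y)).trace = (Q * (Yᵀ * D)).trace := by
    rw [← trace_mul_transpose_of_transpose_eq hQ, Matrix.transpose_mul, Matrix.transpose_transpose]
  rw [finner, Matrix.transpose_smul, Matrix.smul_mul, Matrix.trace_smul, Matrix.transpose_mul,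
    hQ, Matrix.trace_add, ← Matrix.trace_transpose (_ᵀ * Q), Matrix.transpose_mul,
    Matrix.transpose_transpose, hQ, Matrix.mul_add, Matrix.trace_add, hDY, Matrix.mul_assoc,
    smul_eq_mul]
  ring

theorem grad_g_eq {G' : Matrix (Fin n) (Fin p) ℝ} (hf : HasGradAt f (Y * Amap Y) G)
    (hg : HasGradAt (g f) Y G') : G' = jacobianAdjoint Y G :=
  hg.eq_of_hasDerivAt_line (hasDerivAt_g_line hf)

theorem grad_hpen_eq {β : ℝ} {H : Matrix (Fin n) (Fin p) ℝ} (hf : HasGradAt f (Y * Amap Y) G)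
    (hh : HasGradAt (hpen f β) Y H) : H = jacobianAdjoint Y G + β • (Y * (Yᵀ * Y - 1)) :=
  hh.eq_of_hasDerivAt_line fun D => by
    rw [finner_add_left]
    exact (hasDerivAt_g_line hf D).add (hasDerivAt_penalty_line β Y D)

theorem hasDerivAt_jacobianAdjoint {γ Γ : ℝ → Matrix (Fin n) (Fin p) ℝ}
    {γ' Γ' : Matrix (Fin n) (Fin p) ℝ} {t : ℝ} (hγ : HasDerivAt γ γ' t) (hΓ : HasDerivAt Γ Γ' t) :
    HasDerivAt (fun s => jacobianAdjoint (γ s) (Γ s))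
      (Γ' * Amap (γ t) - Γ t * Phi (γ'ᵀ * γ t) -
        (γ' * Phi ((γ t)ᵀ * Γ t) + γ t * Phi (γ'ᵀ * Γ t + (γ t)ᵀ * Γ'))) t := by
  refine ((hΓ.matrix_mul (hasDerivAt_amap hγ)).sub
    (hγ.matrix_mul (hasDerivAt_phi (hγ.matrix_transpose.matrix_mul hΓ)))).congr_deriv ?_
  rw [Matrix.mul_neg, ← sub_eq_add_neg]

end GradientFormulas

section NormalDirection

variable {n p : ℕ} {X : Matrix (Fin n) (Fin p) ℝ} {Λ : Matrix (Fin p) (Fin p) ℝ}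

theorem transpose_mul_mul_of_stiefel (hX : Xᵀ * X = 1) (B : Matrix (Fin p) (Fin p) ℝ) :
    Xᵀ * (X * B) = B := by
  rw [← Matrix.mul_assoc, hX, Matrix.one_mul]

theorem transpose_mul_self_of_stiefel (hX : Xᵀ * X = 1) (hΛ : Λᵀ = Λ) : (X * Λ)ᵀ * X = Λ := by
  rw [Matrix.transpose_mul, hΛ, Matrix.mul_assoc, hX, Matrix.mul_one]

theorem eq_mul_phi_of_jacobianAdjoint_eq_zero (hX : Xᵀ * X = 1) {G : Matrix (Fin n) (Fin p) ℝ}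
    (h : jacobianAdjoint X G = 0) : G = X * Phi (Xᵀ * G) := by
  rwa [jacobianAdjoint, amap_eq_one hX, Matrix.mul_one, sub_eq_zero] at h

theorem hasDerivAt_mul_amap_normal (hX : Xᵀ * X = 1) (hΛ : Λᵀ = Λ) :
    HasDerivAt (fun t : ℝ => (X + t • (X * Λ)) * Amap (X + t • (X * Λ))) 0 0 := by
  have h := hasDerivAt_mul_amap (hasDerivAt_add_smul X (X * Λ))
  simp only [zero_smul, add_zero] at h
  refine h.congr_deriv ?_
  rw [amap_eq_one hX, Matrix.mul_one, transpose_mul_self_of_stiefel hX hΛ,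
    phi_of_transpose_eq hΛ, sub_self]

theorem hasDerivAt_penaltyGrad_normal (hX : Xᵀ * X = 1) (hΛ : Λᵀ = Λ) :
    HasDerivAt (fun t : ℝ => (X + t • (X * Λ)) * ((X + t • (X * Λ))ᵀ * (X + t • (X * Λ)) - 1))
      ((2 : ℝ) • (X * Λ)) 0 := by
  have hγ := hasDerivAt_add_smul X (X * Λ)
  have h := hγ.matrix_mul ((hγ.matrix_transpose.matrix_mul hγ).sub_const 1)
  simp only [zero_smul, add_zero] at h
  refine h.congr_deriv ?_
  rw [hX, sub_self, Matrix.mul_zero, zero_add, transpose_mul_self_of_stiefel hX hΛ,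
    transpose_mul_mul_of_stiefel hX, two_smul, Matrix.mul_add]

theorem hasDerivAt_jacobianAdjoint_normal
    {gradf : Matrix (Fin n) (Fin p) ℝ → Matrix (Fin n) (Fin p) ℝ}
    {L : Matrix (Fin n) (Fin p) ℝ →L[ℝ] Matrix (Fin n) (Fin p) ℝ} {S : Matrix (Fin p) (Fin p) ℝ}
    (hX : Xᵀ * X = 1) (hΛ : Λᵀ = Λ) (hS : Sᵀ = S) (hG : gradf X = X * S)
    (hL : HasFDerivAt gradf L X) :
    HasDerivAt (fun t : ℝ => jacobianAdjoint (X + t • (X * Λ))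
        (gradf ((X + t • (X * Λ)) * Amap (X + t • (X * Λ)))))
      (X * ((-(3 / 2) : ℝ) • (S * Λ + Λ * S))) 0 := by
  have hΓ : HasDerivAt (fun t : ℝ => gradf ((X + t • (X * Λ)) * Amap (X + t • (X * Λ)))) 0 0 := by
    have h := hL.comp_hasDerivAt_of_eq (0 : ℝ) (hasDerivAt_mul_amap_normal hX hΛ)
      (by rw [zero_smul, add_zero, amap_eq_one hX, Matrix.mul_one])
    exact h.congr_deriv (map_zero L)
  have h := hasDerivAt_jacobianAdjoint (hasDerivAt_add_smul X (X * Λ)) hΓ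
  simp only [zero_smul, add_zero, amap_eq_one hX, Matrix.mul_one, hG] at h
  refine h.congr_deriv ?_
  rw [transpose_mul_self_of_stiefel hX hΛ, transpose_mul_mul_of_stiefel hX, ← Matrix.mul_assoc,
    transpose_mul_self_of_stiefel hX hΛ, phi_of_transpose_eq hΛ, phi_of_transpose_eq hS,
    Matrix.mul_zero, add_zero, Phi, Matrix.transpose_mul, hΛ, hS]
  simp only [zero_sub, Matrix.mul_add, Matrix.mul_smul, Matrix.mul_assoc]
  module

end NormalDirection

theorem statement_9_general {n p : ℕ} (f : Matrix (Fin n) (Fin p) ℝ → ℝ) (β M₂ : ℝ)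
    (gradf gradg gradh : Matrix (Fin n) (Fin p) ℝ → Matrix (Fin n) (Fin p) ℝ)
    (Hf : Matrix (Fin n) (Fin p) ℝ → Matrix (Fin n) (Fin p) ℝ →L[ℝ] Matrix (Fin n) (Fin p) ℝ)
    (hgradf : ∀ Y, HasGradAt f Y (gradf Y))
    (hHf : ∀ Y, HasFDerivAt gradf (Hf Y) Y)
    (hgradg : ∀ Y, HasGradAt (g f) Y (gradg Y))
    (hgradh : ∀ Y, HasGradAt (hpen f β) Y (gradh Y))
    (X : Matrix (Fin n) (Fin p) ℝ) (hX : Xᵀ * X = 1)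
    (hstat : gradh X = 0)
    (Hg : Matrix (Fin n) (Fin p) ℝ →L[ℝ] Matrix (Fin n) (Fin p) ℝ)
    (hHg : HasFDerivAt gradg Hg X) (hM₂ : @Norm.norm _ (@ContinuousLinearMap.hasOpNorm ℝ ℝ (Matrix (Fin n) (Fin p) ℝ) (Matrix (Fin n) (Fin p) ℝ) _ _ _ _ _ _ (RingHom.id ℝ)) Hg ≤ M₂)
    (Hh : Matrix (Fin n) (Fin p) ℝ →L[ℝ] Matrix (Fin n) (Fin p) ℝ)
    (hHh : HasFDerivAt gradh Hh X) :
    (∀ Λ : Matrix (Fin p) (Fin p) ℝ, Λᵀ = Λ →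
      (2 * β - M₂) * ‖X * Λ‖ ^ 2 ≤ finner (X * Λ) (Hh (X * Λ))) ∧
    (∀ D₁ : Matrix (Fin n) (Fin p) ℝ, Phi (D₁ᵀ * X) = 0 →
      ∀ Λ : Matrix (Fin p) (Fin p) ℝ, Λᵀ = Λ →
        finner D₁ (Hh (X * Λ)) = 0) := by
  have hgradg_eq : gradg = fun Y => jacobianAdjoint Y (gradf (Y * Amap Y)) :=
    funext fun Y => grad_g_eq (hgradf _) (hgradg Y)
  have hgradh_eq : gradh = fun Y => gradg Y + β • (Y * (Yᵀ * Y - 1)) :=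
    funext fun Y => by rw [hgradg_eq, grad_hpen_eq (hgradf _) (hgradh Y)]
  set S := Phi (Xᵀ * gradf X)
  have hS : Sᵀ = S := transpose_phi _
  have hG : gradf X = X * S := by
    have h := congrFun hgradh_eq X
    simp only [hgradg_eq, hstat, hX, sub_self, Matrix.mul_zero, smul_zero, add_zero,
      amap_eq_one hX, Matrix.mul_one] at h
    exact eq_mul_phi_of_jacobianAdjoint_eq_zero hX h.symm
  have hHg_normal : ∀ Λ : Matrix (Fin p) (Fin p) ℝ, Λᵀ = Λ →
      Hg (X * Λ) = X * ((-(3 / 2) : ℝ) • (S * Λ + Λ * S)) := fun Λ hΛ =>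
    hHg.apply_eq_of_hasDerivAt_add_smul <| by
      rw [hgradg_eq]
      exact hasDerivAt_jacobianAdjoint_normal hX hΛ hS hG (hHf X)
  have hHh_normal : ∀ Λ : Matrix (Fin p) (Fin p) ℝ, Λᵀ = Λ →
      Hh (X * Λ) = Hg (X * Λ) + (2 * β) • (X * Λ) := fun Λ hΛ =>
    hHh.apply_eq_of_hasDerivAt_add_smul <| by
      rw [hgradh_eq, mul_comm, mul_smul]
      exact (hHg.comp_hasDerivAt_of_eq (0 : ℝ) (hasDerivAt_add_smul X (X * Λ)) (by simp)).add
        ((hasDerivAt_penaltyGrad_normal hX hΛ).const_smul β)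
  refine ⟨fun Λ hΛ => ?_, fun D₁ hD₁ Λ hΛ => ?_⟩
  · have hop : ‖Hg (X * Λ)‖ ≤ M₂ * ‖X * Λ‖ :=
      (Hg.le_opNorm _).trans (mul_le_mul_of_nonneg_right hM₂ (norm_nonneg _))
    rw [hHh_normal Λ hΛ, finner_add_right, finner_smul_right, finner_self]
    linarith [neg_mul_norm_sq_le_finner hop]
  · rw [hHh_normal Λ hΛ, hHg_normal Λ hΛ, ← Matrix.mul_smul, ← Matrix.mul_add]
    refine finner_mul_eq_zero_of_phi_eq_zero hD₁ ?_
    simp [Matrix.transpose_add, hS, hΛ, add_comm]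

theorem statement_9 {n p : ℕ} (f : Matrix (Fin n) (Fin p) ℝ → ℝ) (β M₂ : ℝ)
    (gradf gradg gradh : Matrix (Fin n) (Fin p) ℝ → Matrix (Fin n) (Fin p) ℝ)
    (Hf : Matrix (Fin n) (Fin p) ℝ → Matrix (Fin n) (Fin p) ℝ →L[ℝ] Matrix (Fin n) (Fin p) ℝ)
    (hgradf : ∀ Y, HasGradAt f Y (gradf Y))
    (hHf : ∀ Y, HasFDerivAt gradf (Hf Y) Y)
    (hHfCont : Continuous Hf)
    (hgradg : ∀ Y, HasGradAt (g f) Y (gradg Y))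
    (hgradh : ∀ Y, HasGradAt (hpen f β) Y (gradh Y))
    (X : Matrix (Fin n) (Fin p) ℝ) (hX : Xᵀ * X = 1)
    (hstat : gradh X = 0)
    (Hg : Matrix (Fin n) (Fin p) ℝ →L[ℝ] Matrix (Fin n) (Fin p) ℝ)
    (hHg : HasFDerivAt gradg Hg X) (hM₂ : @Norm.norm _ (@ContinuousLinearMap.hasOpNorm ℝ ℝ (Matrix (Fin n) (Fin p) ℝ) (Matrix (Fin n) (Fin p) ℝ) _ _ _ _ _ _ (RingHom.id ℝ)) Hg ≤ M₂)
    (Hh : Matrix (Fin n) (Fin p) ℝ →L[ℝ] Matrix (Fin n) (Fin p) ℝ)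
    (hHh : HasFDerivAt gradh Hh X) :
    (∀ Λ : Matrix (Fin p) (Fin p) ℝ, Λᵀ = Λ →
      (2 * β - M₂) * ‖X * Λ‖ ^ 2 ≤ finner (X * Λ) (Hh (X * Λ))) ∧
    (∀ D₁ : Matrix (Fin n) (Fin p) ℝ, Phi (D₁ᵀ * X) = 0 →
      ∀ Λ : Matrix (Fin p) (Fin p) ℝ, Λᵀ = Λ →
        finner D₁ (Hh (X * Λ)) = 0) :=
  statement_9_general f β M₂ gradf gradg gradh Hf hgradf hHf hgradg hgradh X hX hstat Hg hHg hM₂ Hh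
    hHh

end ExPen
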